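/- For every positive integer n, the group with presentation ⟨a, b, c, d, e, f | a = c^n b c^{-n}, c = b^n d b^{-n}, b = d^n c d^{-n}, d = f^n e f^{-n}, f = e^n a e^{-n}, e = a^n f a^{-n}⟩ (the n-th generalized knot group of the granny knot from its standard six-arc diagram) is isomorphic to the group with presentation ⟨b, d, e | b d^n b^n = d^n b^n d, d e^n d^n = e^n d^n e, e^{-n} d^{-n} e d^n e^n = b^n d^n b d^{-n} b^{-n}⟩. -/

import Mathlib

/-- Relators of the n-th generalized knot group of the granny knot from its standard
six-arc diagram: ⟨a, b, c, d, e, f | a = cⁿ b c⁻ⁿ, c = bⁿ d b⁻ⁿ, b = dⁿ c d⁻ⁿ,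
d = fⁿ e f⁻ⁿ, f = eⁿ a e⁻ⁿ, e = aⁿ f a⁻ⁿ⟩, with a, b, c, d, e, f = 0, 1, 2, 3, 4, 5. -/
def grannyKnotDiagRels (n : ℕ) : Set (FreeGroup (Fin 6)) :=
  let a : FreeGroup (Fin 6) := FreeGroup.of 0
  let b : FreeGroup (Fin 6) := FreeGroup.of 1
  let c : FreeGroup (Fin 6) := FreeGroup.of 2
  let d : FreeGroup (Fin 6) := FreeGroup.of 3
  let e : FreeGroup (Fin 6) := FreeGroup.of 4
  let f : FreeGroup (Fin 6) := FreeGroup.of 5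
  {a * (c ^ n * b * (c ^ n)⁻¹)⁻¹,
   c * (b ^ n * d * (b ^ n)⁻¹)⁻¹,
   b * (d ^ n * c * (d ^ n)⁻¹)⁻¹,
   d * (f ^ n * e * (f ^ n)⁻¹)⁻¹,
   f * (e ^ n * a * (e ^ n)⁻¹)⁻¹,
   e * (a ^ n * f * (a ^ n)⁻¹)⁻¹}

/-- Relators of ⟨b, d, e | b dⁿ bⁿ = dⁿ bⁿ d, d eⁿ dⁿ = eⁿ dⁿ e,
e⁻ⁿ d⁻ⁿ e dⁿ eⁿ = bⁿ dⁿ b d⁻ⁿ b⁻ⁿ⟩, with b, d, e = 0, 1, 2. -/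
def GnGKRels (n : ℕ) : Set (FreeGroup (Fin 3)) :=
  let b : FreeGroup (Fin 3) := FreeGroup.of 0
  let d : FreeGroup (Fin 3) := FreeGroup.of 1
  let e : FreeGroup (Fin 3) := FreeGroup.of 2
  {b * d ^ n * b ^ n * (d ^ n * b ^ n * d)⁻¹,
   d * e ^ n * d ^ n * (e ^ n * d ^ n * e)⁻¹,
   (e ^ n)⁻¹ * (d ^ n)⁻¹ * e * d ^ n * e ^ n * (b ^ n * d ^ n * b * (d ^ n)⁻¹ * (b ^ n)⁻¹)⁻¹}

namespace Stmt4Aux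


variable {G : Type*} [Group G]

theorem conjpow' (g k : G) (m : ℕ) : (g⁻¹ * k * g) ^ m = g⁻¹ * k ^ m * g := by
  simpa using conj_pow (i := m) (a := g⁻¹) (b := k)

section
variable (n : ℕ) (x y : G)

/-- K consequence of the trefoil relation. -/
theorem trefK (h : x * y ^ n * x ^ n = y ^ n * x ^ n * y) :
    x ^ n * y * (x ^ n)⁻¹ = (y ^ n)⁻¹ * x * y ^ n := by
  calc x ^ n * y * (x ^ n)⁻¹
      = (y ^ n)⁻¹ * (y ^ n * x ^ n * y) * (x ^ n)⁻¹ := by group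
    _ = (y ^ n)⁻¹ * (x * y ^ n * x ^ n) * (x ^ n)⁻¹ := by rw [← h]
    _ = (y ^ n)⁻¹ * x * y ^ n := by group

theorem trefK2 (h : x * y ^ n * x ^ n = y ^ n * x ^ n * y) :
    x ^ n * y ^ n * (x ^ n)⁻¹ = (y ^ n)⁻¹ * x ^ n * y ^ n := by
  calc x ^ n * y ^ n * (x ^ n)⁻¹
      = (x ^ n * y * (x ^ n)⁻¹) ^ n := by rw [conj_pow]
    _ = ((y ^ n)⁻¹ * x * y ^ n) ^ n := by rw [trefK n x y h]
    _ = (y ^ n)⁻¹ * x ^ n * y ^ n := by rw [conjpow']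

theorem trefK2' (h : x * y ^ n * x ^ n = y ^ n * x ^ n * y) :
    x ^ n * (y ^ n)⁻¹ * (x ^ n)⁻¹ = (y ^ n)⁻¹ * (x ^ n)⁻¹ * y ^ n := by
  calc x ^ n * (y ^ n)⁻¹ * (x ^ n)⁻¹
      = (x ^ n * y ^ n * (x ^ n)⁻¹)⁻¹ := by group
    _ = ((y ^ n)⁻¹ * x ^ n * y ^ n)⁻¹ := by rw [trefK2 n x y h]
    _ = (y ^ n)⁻¹ * (x ^ n)⁻¹ * y ^ n := by group

theorem hAn :
    ((y ^ n)⁻¹ * (x ^ n)⁻¹ * y * x ^ n * y ^ n) ^ n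
      = (y ^ n)⁻¹ * (x ^ n)⁻¹ * y ^ n * x ^ n * y ^ n := by
  have h1 : (y ^ n)⁻¹ * (x ^ n)⁻¹ * y * x ^ n * y ^ n
      = (x ^ n * y ^ n)⁻¹ * y * (x ^ n * y ^ n) := by group
  rw [h1, conjpow']
  group

/-- (i): Aⁿ y A⁻ⁿ = y⁻ⁿ x yⁿ for A = y⁻ⁿ x⁻ⁿ y xⁿ yⁿ. -/
theorem lem_i (h : x * y ^ n * x ^ n = y ^ n * x ^ n * y) :
    ((y ^ n)⁻¹ * (x ^ n)⁻¹ * y * x ^ n * y ^ n) ^ n * y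
        * (((y ^ n)⁻¹ * (x ^ n)⁻¹ * y * x ^ n * y ^ n) ^ n)⁻¹
      = (y ^ n)⁻¹ * x * y ^ n := by
  calc ((y ^ n)⁻¹ * (x ^ n)⁻¹ * y * x ^ n * y ^ n) ^ n * y
        * (((y ^ n)⁻¹ * (x ^ n)⁻¹ * y * x ^ n * y ^ n) ^ n)⁻¹
      = (y ^ n)⁻¹ * (x ^ n)⁻¹ * y ^ n * (x ^ n * y * (x ^ n)⁻¹)
          * (y ^ n)⁻¹ * x ^ n * y ^ n := by rw [hAn]; group
    _ = (y ^ n)⁻¹ * (x ^ n)⁻¹ * y ^ n * ((y ^ n)⁻¹ * x * y ^ n)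
          * (y ^ n)⁻¹ * x ^ n * y ^ n := by rw [trefK n x y h]
    _ = (y ^ n)⁻¹ * x * y ^ n := by group

/-- (ii): A⁻ⁿ y Aⁿ = yⁿ A y⁻ⁿ. -/
theorem lem_ii (h : x * y ^ n * x ^ n = y ^ n * x ^ n * y) :
    (((y ^ n)⁻¹ * (x ^ n)⁻¹ * y * x ^ n * y ^ n) ^ n)⁻¹ * y
        * ((y ^ n)⁻¹ * (x ^ n)⁻¹ * y * x ^ n * y ^ n) ^ n
      = y ^ n * ((y ^ n)⁻¹ * (x ^ n)⁻¹ * y * x ^ n * y ^ n) * (y ^ n)⁻¹ := by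
  have hK := trefK n x y h
  have hK2 := trefK2 n x y h
  have hC : (y ^ n)⁻¹ * ((y ^ n)⁻¹ * x * y ^ n) * y ^ n
      = x ^ n * y ^ n * ((x ^ n)⁻¹ * y * x ^ n) * (x ^ n * y ^ n)⁻¹ := by
    calc (y ^ n)⁻¹ * ((y ^ n)⁻¹ * x * y ^ n) * y ^ n
        = (y ^ n)⁻¹ * (x ^ n * y * (x ^ n)⁻¹) * y ^ n := by rw [← hK]
      _ = ((y ^ n)⁻¹ * x ^ n * y ^ n) * y * ((y ^ n)⁻¹ * x ^ n * y ^ n)⁻¹ := by group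
      _ = (x ^ n * y ^ n * (x ^ n)⁻¹) * y * (x ^ n * y ^ n * (x ^ n)⁻¹)⁻¹ := by rw [← hK2]
      _ = x ^ n * y ^ n * ((x ^ n)⁻¹ * y * x ^ n) * (x ^ n * y ^ n)⁻¹ := by group
  calc (((y ^ n)⁻¹ * (x ^ n)⁻¹ * y * x ^ n * y ^ n) ^ n)⁻¹ * y
        * ((y ^ n)⁻¹ * (x ^ n)⁻¹ * y * x ^ n * y ^ n) ^ n
      = (y ^ n)⁻¹ * (x ^ n)⁻¹ * (y ^ n)⁻¹ * (x ^ n * y * (x ^ n)⁻¹)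
          * (y ^ n * x ^ n * y ^ n) := by rw [hAn]; group
    _ = (y ^ n)⁻¹ * (x ^ n)⁻¹ * (y ^ n)⁻¹ * ((y ^ n)⁻¹ * x * y ^ n)
          * (y ^ n * x ^ n * y ^ n) := by rw [hK]
    _ = (y ^ n)⁻¹ * (x ^ n)⁻¹ * ((y ^ n)⁻¹ * ((y ^ n)⁻¹ * x * y ^ n) * y ^ n)
          * (x ^ n * y ^ n) := by group
    _ = (y ^ n)⁻¹ * (x ^ n)⁻¹
          * (x ^ n * y ^ n * ((x ^ n)⁻¹ * y * x ^ n) * (x ^ n * y ^ n)⁻¹)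
          * (x ^ n * y ^ n) := by rw [hC]
    _ = y ^ n * ((y ^ n)⁻¹ * (x ^ n)⁻¹ * y * x ^ n * y ^ n) * (y ^ n)⁻¹ := by group

theorem hwn :
    (x ^ n * y ^ n * x * (y ^ n)⁻¹ * (x ^ n)⁻¹) ^ n
      = x ^ n * y ^ n * x ^ n * (x ^ n * y ^ n)⁻¹ := by
  have h1 : x ^ n * y ^ n * x * (y ^ n)⁻¹ * (x ^ n)⁻¹
      = (x ^ n * y ^ n) * x * (x ^ n * y ^ n)⁻¹ := by group
  rw [h1, conj_pow]

/-- K for (w, x) where w = xⁿ yⁿ x y⁻ⁿ x⁻ⁿ. -/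
theorem lem_Kw (h : x * y ^ n * x ^ n = y ^ n * x ^ n * y) :
    (x ^ n * y ^ n * x * (y ^ n)⁻¹ * (x ^ n)⁻¹) ^ n * x
        * ((x ^ n * y ^ n * x * (y ^ n)⁻¹ * (x ^ n)⁻¹) ^ n)⁻¹
      = (x ^ n)⁻¹ * (x ^ n * y ^ n * x * (y ^ n)⁻¹ * (x ^ n)⁻¹) * x ^ n := by
  calc (x ^ n * y ^ n * x * (y ^ n)⁻¹ * (x ^ n)⁻¹) ^ n * x
        * ((x ^ n * y ^ n * x * (y ^ n)⁻¹ * (x ^ n)⁻¹) ^ n)⁻¹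
      = x ^ n * y ^ n * ((x ^ n * (y ^ n)⁻¹ * (x ^ n)⁻¹) * x
          * (x ^ n * y ^ n * (x ^ n)⁻¹)) * (y ^ n)⁻¹ * (x ^ n)⁻¹ := by
        rw [hwn]; group
    _ = x ^ n * y ^ n * (((y ^ n)⁻¹ * (x ^ n)⁻¹ * y ^ n) * x
          * ((y ^ n)⁻¹ * x ^ n * y ^ n)) * (y ^ n)⁻¹ * (x ^ n)⁻¹ := by
        rw [trefK2' n x y h, trefK2 n x y h]
    _ = (x ^ n)⁻¹ * (x ^ n * y ^ n * x * (y ^ n)⁻¹ * (x ^ n)⁻¹) * x ^ n := by group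

/-- Q1 : S(w, x). -/
theorem lem_Q1 (h : x * y ^ n * x ^ n = y ^ n * x ^ n * y) :
    (x ^ n * y ^ n * x * (y ^ n)⁻¹ * (x ^ n)⁻¹) * x ^ n
        * ((x ^ n * y ^ n * x * (y ^ n)⁻¹ * (x ^ n)⁻¹)) ^ n
      = x ^ n * ((x ^ n * y ^ n * x * (y ^ n)⁻¹ * (x ^ n)⁻¹)) ^ n * x := by
  have hKw := lem_Kw n x y h
  calc (x ^ n * y ^ n * x * (y ^ n)⁻¹ * (x ^ n)⁻¹) * x ^ n
        * ((x ^ n * y ^ n * x * (y ^ n)⁻¹ * (x ^ n)⁻¹)) ^ n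
      = x ^ n * ((x ^ n)⁻¹ * (x ^ n * y ^ n * x * (y ^ n)⁻¹ * (x ^ n)⁻¹) * x ^ n)
          * ((x ^ n * y ^ n * x * (y ^ n)⁻¹ * (x ^ n)⁻¹)) ^ n := by group
    _ = x ^ n * ((x ^ n * y ^ n * x * (y ^ n)⁻¹ * (x ^ n)⁻¹) ^ n * x
          * ((x ^ n * y ^ n * x * (y ^ n)⁻¹ * (x ^ n)⁻¹) ^ n)⁻¹)
          * ((x ^ n * y ^ n * x * (y ^ n)⁻¹ * (x ^ n)⁻¹)) ^ n := by rw [← hKw]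
    _ = x ^ n * ((x ^ n * y ^ n * x * (y ^ n)⁻¹ * (x ^ n)⁻¹)) ^ n * x := by group

/-- Q2 : x⁻ⁿ w⁻ⁿ x wⁿ xⁿ = y. -/
theorem lem_Q2 (h : x * y ^ n * x ^ n = y ^ n * x ^ n * y) :
    (x ^ n)⁻¹ * (((x ^ n * y ^ n * x * (y ^ n)⁻¹ * (x ^ n)⁻¹)) ^ n)⁻¹ * x
        * ((x ^ n * y ^ n * x * (y ^ n)⁻¹ * (x ^ n)⁻¹)) ^ n * x ^ n = y := by
  calc (x ^ n)⁻¹ * (((x ^ n * y ^ n * x * (y ^ n)⁻¹ * (x ^ n)⁻¹)) ^ n)⁻¹ * x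
        * ((x ^ n * y ^ n * x * (y ^ n)⁻¹ * (x ^ n)⁻¹)) ^ n * x ^ n
      = y ^ n * (x ^ n)⁻¹ * ((y ^ n)⁻¹ * x * y ^ n) * x ^ n * (y ^ n)⁻¹ := by
        rw [hwn]; group
    _ = y ^ n * (x ^ n)⁻¹ * (x ^ n * y * (x ^ n)⁻¹) * x ^ n * (y ^ n)⁻¹ := by
        rw [← trefK n x y h]
    _ = y := by group

/-- Derive S(x,y) from the two elimination equations. -/
theorem lemS (c : G) (h1 : x = y ^ n * c * (y ^ n)⁻¹) (h2 : c = x ^ n * y * (x ^ n)⁻¹) :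
    x * y ^ n * x ^ n = y ^ n * x ^ n * y := by
  nth_rewrite 1 [h1]
  rw [h2]
  group

/-- w-expression for the eliminated generator. -/
theorem lemW (z c w : G) (h1 : w = c ^ n * z * (c ^ n)⁻¹) (h2 : c = z ^ n * y * (z ^ n)⁻¹) :
    w = z ^ n * y ^ n * z * (y ^ n)⁻¹ * (z ^ n)⁻¹ := by
  rw [h2, conj_pow] at h1
  rw [h1]; group

end

theorem of_rel {α : Type*} {rels : Set (FreeGroup α)} {x y : FreeGroup α}
    (h : x * y⁻¹ ∈ rels) :
    PresentedGroup.mk rels x = PresentedGroup.mk rels y := by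
  have h2 : PresentedGroup.mk rels (x * y⁻¹) = 1 :=
    (QuotientGroup.eq_one_iff _).mpr (Subgroup.subset_normalClosure h)
  rw [map_mul, map_inv] at h2
  exact mul_inv_eq_one.mp h2

section relations
variable (n : ℕ)

-- generators of the granny-knot presented group
local notation "ga" => (PresentedGroup.of 0 : PresentedGroup (grannyKnotDiagRels n))
local notation "gb" => (PresentedGroup.of 1 : PresentedGroup (grannyKnotDiagRels n))
local notation "gc" => (PresentedGroup.of 2 : PresentedGroup (grannyKnotDiagRels n))
local notation "gd" => (PresentedGroup.of 3 : PresentedGroup (grannyKnotDiagRels n))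
local notation "ge" => (PresentedGroup.of 4 : PresentedGroup (grannyKnotDiagRels n))
local notation "gf" => (PresentedGroup.of 5 : PresentedGroup (grannyKnotDiagRels n))

theorem relG1_1 : ga = gc ^ n * gb * (gc ^ n)⁻¹ := by
  have := of_rel (rels := grannyKnotDiagRels n) (x := FreeGroup.of 0)
    (y := FreeGroup.of 2 ^ n * FreeGroup.of 1 * (FreeGroup.of 2 ^ n)⁻¹)
    (by simp [grannyKnotDiagRels])
  simpa [map_mul, map_inv, map_pow, PresentedGroup.of] using this

theorem relG1_2 : gc = gb ^ n * gd * (gb ^ n)⁻¹ := by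
  have := of_rel (rels := grannyKnotDiagRels n) (x := FreeGroup.of 2)
    (y := FreeGroup.of 1 ^ n * FreeGroup.of 3 * (FreeGroup.of 1 ^ n)⁻¹)
    (by simp [grannyKnotDiagRels])
  simpa [map_mul, map_inv, map_pow, PresentedGroup.of] using this

theorem relG1_3 : gb = gd ^ n * gc * (gd ^ n)⁻¹ := by
  have := of_rel (rels := grannyKnotDiagRels n) (x := FreeGroup.of 1)
    (y := FreeGroup.of 3 ^ n * FreeGroup.of 2 * (FreeGroup.of 3 ^ n)⁻¹)
    (by simp [grannyKnotDiagRels])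
  simpa [map_mul, map_inv, map_pow, PresentedGroup.of] using this

theorem relG1_4 : gd = gf ^ n * ge * (gf ^ n)⁻¹ := by
  have := of_rel (rels := grannyKnotDiagRels n) (x := FreeGroup.of 3)
    (y := FreeGroup.of 5 ^ n * FreeGroup.of 4 * (FreeGroup.of 5 ^ n)⁻¹)
    (by simp [grannyKnotDiagRels])
  simpa [map_mul, map_inv, map_pow, PresentedGroup.of] using this

theorem relG1_5 : gf = ge ^ n * ga * (ge ^ n)⁻¹ := by
  have := of_rel (rels := grannyKnotDiagRels n) (x := FreeGroup.of 5)
    (y := FreeGroup.of 4 ^ n * FreeGroup.of 0 * (FreeGroup.of 4 ^ n)⁻¹)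
    (by simp [grannyKnotDiagRels])
  simpa [map_mul, map_inv, map_pow, PresentedGroup.of] using this

theorem relG1_6 : ge = ga ^ n * gf * (ga ^ n)⁻¹ := by
  have := of_rel (rels := grannyKnotDiagRels n) (x := FreeGroup.of 4)
    (y := FreeGroup.of 0 ^ n * FreeGroup.of 5 * (FreeGroup.of 0 ^ n)⁻¹)
    (by simp [grannyKnotDiagRels])
  simpa [map_mul, map_inv, map_pow, PresentedGroup.of] using this

-- generators of the target group
local notation "B" => (PresentedGroup.of 0 : PresentedGroup (GnGKRels n))
local notation "D" => (PresentedGroup.of 1 : PresentedGroup (GnGKRels n))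
local notation "E" => (PresentedGroup.of 2 : PresentedGroup (GnGKRels n))

theorem relG2_1 : B * D ^ n * B ^ n = D ^ n * B ^ n * D := by
  have := of_rel (rels := GnGKRels n)
    (x := FreeGroup.of 0 * FreeGroup.of 1 ^ n * FreeGroup.of 0 ^ n)
    (y := FreeGroup.of 1 ^ n * FreeGroup.of 0 ^ n * FreeGroup.of 1)
    (by simp [GnGKRels])
  simpa [map_mul, map_inv, map_pow, PresentedGroup.of] using this

theorem relG2_2 : D * E ^ n * D ^ n = E ^ n * D ^ n * E := by
  have := of_rel (rels := GnGKRels n)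
    (x := FreeGroup.of 1 * FreeGroup.of 2 ^ n * FreeGroup.of 1 ^ n)
    (y := FreeGroup.of 2 ^ n * FreeGroup.of 1 ^ n * FreeGroup.of 2)
    (by simp [GnGKRels])
  simpa [map_mul, map_inv, map_pow, PresentedGroup.of] using this

theorem relG2_3 :
    (E ^ n)⁻¹ * (D ^ n)⁻¹ * E * D ^ n * E ^ n
      = B ^ n * D ^ n * B * (D ^ n)⁻¹ * (B ^ n)⁻¹ := by
  have := of_rel (rels := GnGKRels n)
    (x := (FreeGroup.of 2 ^ n)⁻¹ * (FreeGroup.of 1 ^ n)⁻¹ * FreeGroup.of 2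
      * FreeGroup.of 1 ^ n * FreeGroup.of 2 ^ n)
    (y := FreeGroup.of 0 ^ n * FreeGroup.of 1 ^ n * FreeGroup.of 0
      * (FreeGroup.of 1 ^ n)⁻¹ * (FreeGroup.of 0 ^ n)⁻¹)
    (by simp [GnGKRels])
  simpa [map_mul, map_inv, map_pow, PresentedGroup.of] using this

end relations

section maps
variable (n : ℕ)

local notation "ga" => (PresentedGroup.of 0 : PresentedGroup (grannyKnotDiagRels n))
local notation "gb" => (PresentedGroup.of 1 : PresentedGroup (grannyKnotDiagRels n))
local notation "gc" => (PresentedGroup.of 2 : PresentedGroup (grannyKnotDiagRels n))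
local notation "gd" => (PresentedGroup.of 3 : PresentedGroup (grannyKnotDiagRels n))
local notation "ge" => (PresentedGroup.of 4 : PresentedGroup (grannyKnotDiagRels n))
local notation "gf" => (PresentedGroup.of 5 : PresentedGroup (grannyKnotDiagRels n))
local notation "B" => (PresentedGroup.of 0 : PresentedGroup (GnGKRels n))
local notation "D" => (PresentedGroup.of 1 : PresentedGroup (GnGKRels n))
local notation "E" => (PresentedGroup.of 2 : PresentedGroup (GnGKRels n))

/-- image of a : the element z(D,E) = E⁻ⁿ D⁻ⁿ E Dⁿ Eⁿ. -/
def Ag : PresentedGroup (GnGKRels n) :=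
  ((PresentedGroup.of 2 : PresentedGroup (GnGKRels n)) ^ n)⁻¹
    * ((PresentedGroup.of 1 : PresentedGroup (GnGKRels n)) ^ n)⁻¹
    * PresentedGroup.of 2 * (PresentedGroup.of 1 : PresentedGroup (GnGKRels n)) ^ n
    * (PresentedGroup.of 2 : PresentedGroup (GnGKRels n)) ^ n

def f1 : Fin 6 → PresentedGroup (GnGKRels n) :=
  ![Ag n,
    PresentedGroup.of 0,
    (PresentedGroup.of 0 : PresentedGroup (GnGKRels n)) ^ n * PresentedGroup.of 1
      * ((PresentedGroup.of 0 : PresentedGroup (GnGKRels n)) ^ n)⁻¹,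
    PresentedGroup.of 1,
    PresentedGroup.of 2,
    (PresentedGroup.of 2 : PresentedGroup (GnGKRels n)) ^ n * Ag n
      * ((PresentedGroup.of 2 : PresentedGroup (GnGKRels n)) ^ n)⁻¹]

def f2 : Fin 3 → PresentedGroup (grannyKnotDiagRels n) :=
  ![PresentedGroup.of 1, PresentedGroup.of 3, PresentedGroup.of 4]

theorem hAg : Ag n = (E ^ n)⁻¹ * (D ^ n)⁻¹ * E * D ^ n * E ^ n := rfl

theorem lift_f1_rels : ∀ r ∈ grannyKnotDiagRels n, FreeGroup.lift (f1 n) r = 1 := by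
  intro r hr
  simp only [grannyKnotDiagRels, Set.mem_insert_iff, Set.mem_singleton_iff] at hr
  obtain rfl | rfl | rfl | rfl | rfl | rfl := hr
  · -- a = cⁿ b c⁻ⁿ
    simp only [map_mul, map_inv, map_pow, FreeGroup.lift_apply_of]
    show Ag n * ((B ^ n * D * (B ^ n)⁻¹) ^ n * B * ((B ^ n * D * (B ^ n)⁻¹) ^ n)⁻¹)⁻¹ = 1
    rw [conj_pow, mul_inv_eq_one, hAg, relG2_3 n]
    group
  · -- c = bⁿ d b⁻ⁿ
    simp only [map_mul, map_inv, map_pow, FreeGroup.lift_apply_of]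
    show (B ^ n * D * (B ^ n)⁻¹) * (B ^ n * D * (B ^ n)⁻¹)⁻¹ = 1
    group
  · -- b = dⁿ c d⁻ⁿ
    simp only [map_mul, map_inv, map_pow, FreeGroup.lift_apply_of]
    show B * (D ^ n * (B ^ n * D * (B ^ n)⁻¹) * (D ^ n)⁻¹)⁻¹ = 1
    rw [mul_inv_eq_one]
    have : D ^ n * (B ^ n * D * (B ^ n)⁻¹) * (D ^ n)⁻¹ = B := by
      calc D ^ n * (B ^ n * D * (B ^ n)⁻¹) * (D ^ n)⁻¹
          = (D ^ n * B ^ n * D) * ((B ^ n)⁻¹ * (D ^ n)⁻¹) := by group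
        _ = (B * D ^ n * B ^ n) * ((B ^ n)⁻¹ * (D ^ n)⁻¹) := by rw [← relG2_1 n]
        _ = B := by group
    exact this.symm
  · -- d = fⁿ e f⁻ⁿ
    simp only [map_mul, map_inv, map_pow, FreeGroup.lift_apply_of]
    show D * ((E ^ n * Ag n * (E ^ n)⁻¹) ^ n * E * ((E ^ n * Ag n * (E ^ n)⁻¹) ^ n)⁻¹)⁻¹ = 1
    rw [conj_pow, mul_inv_eq_one, hAg]
    have hi := lem_i n D E (relG2_2 n)
    have : E ^ n * ((E ^ n)⁻¹ * (D ^ n)⁻¹ * E * D ^ n * E ^ n) ^ n * (E ^ n)⁻¹ * E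
        * (E ^ n * ((E ^ n)⁻¹ * (D ^ n)⁻¹ * E * D ^ n * E ^ n) ^ n * (E ^ n)⁻¹)⁻¹ = D := by
      calc E ^ n * ((E ^ n)⁻¹ * (D ^ n)⁻¹ * E * D ^ n * E ^ n) ^ n * (E ^ n)⁻¹ * E
          * (E ^ n * ((E ^ n)⁻¹ * (D ^ n)⁻¹ * E * D ^ n * E ^ n) ^ n * (E ^ n)⁻¹)⁻¹
          = E ^ n * (((E ^ n)⁻¹ * (D ^ n)⁻¹ * E * D ^ n * E ^ n) ^ n * E
            * (((E ^ n)⁻¹ * (D ^ n)⁻¹ * E * D ^ n * E ^ n) ^ n)⁻¹) * (E ^ n)⁻¹ := by group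
        _ = E ^ n * ((E ^ n)⁻¹ * D * E ^ n) * (E ^ n)⁻¹ := by rw [hi]
        _ = D := by group
    exact this.symm
  · -- f = eⁿ a e⁻ⁿ
    simp only [map_mul, map_inv, map_pow, FreeGroup.lift_apply_of]
    show (E ^ n * Ag n * (E ^ n)⁻¹) * (E ^ n * Ag n * (E ^ n)⁻¹)⁻¹ = 1
    group
  · -- e = aⁿ f a⁻ⁿ
    simp only [map_mul, map_inv, map_pow, FreeGroup.lift_apply_of]
    show E * (Ag n ^ n * (E ^ n * Ag n * (E ^ n)⁻¹) * (Ag n ^ n)⁻¹)⁻¹ = 1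
    rw [mul_inv_eq_one, hAg]
    have hii := lem_ii n D E (relG2_2 n)
    have : ((E ^ n)⁻¹ * (D ^ n)⁻¹ * E * D ^ n * E ^ n) ^ n
          * (E ^ n * ((E ^ n)⁻¹ * (D ^ n)⁻¹ * E * D ^ n * E ^ n) * (E ^ n)⁻¹)
          * (((E ^ n)⁻¹ * (D ^ n)⁻¹ * E * D ^ n * E ^ n) ^ n)⁻¹ = E := by
      calc ((E ^ n)⁻¹ * (D ^ n)⁻¹ * E * D ^ n * E ^ n) ^ n
          * (E ^ n * ((E ^ n)⁻¹ * (D ^ n)⁻¹ * E * D ^ n * E ^ n) * (E ^ n)⁻¹)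
          * (((E ^ n)⁻¹ * (D ^ n)⁻¹ * E * D ^ n * E ^ n) ^ n)⁻¹
          = ((E ^ n)⁻¹ * (D ^ n)⁻¹ * E * D ^ n * E ^ n) ^ n
            * ((((E ^ n)⁻¹ * (D ^ n)⁻¹ * E * D ^ n * E ^ n) ^ n)⁻¹ * E
              * ((E ^ n)⁻¹ * (D ^ n)⁻¹ * E * D ^ n * E ^ n) ^ n)
            * (((E ^ n)⁻¹ * (D ^ n)⁻¹ * E * D ^ n * E ^ n) ^ n)⁻¹ := by rw [← hii]
        _ = E := by group
    exact this.symm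

/-- Key fact in the source group: z(d,e) = a. -/
theorem zde_eq_a : (ge ^ n)⁻¹ * (gd ^ n)⁻¹ * ge * gd ^ n * ge ^ n = ga := by
  have hSea : ge * ga ^ n * ge ^ n = ga ^ n * ge ^ n * ga :=
    lemS n ge ga gf (relG1_6 n) (relG1_5 n)
  have hdw : gd = ge ^ n * ga ^ n * ge * (ga ^ n)⁻¹ * (ge ^ n)⁻¹ :=
    lemW n (y := ga) ge gf gd (relG1_4 n) (relG1_5 n)
  have h2 := lem_Q2 n ge ga hSea
  rw [← hdw] at h2
  exact h2

theorem lift_f2_rels : ∀ r ∈ GnGKRels n, FreeGroup.lift (f2 n) r = 1 := by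
  have hSea : ge * ga ^ n * ge ^ n = ga ^ n * ge ^ n * ga :=
    lemS n ge ga gf (relG1_6 n) (relG1_5 n)
  have hdw : gd = ge ^ n * ga ^ n * ge * (ga ^ n)⁻¹ * (ge ^ n)⁻¹ :=
    lemW n (y := ga) ge gf gd (relG1_4 n) (relG1_5 n)
  intro r hr
  simp only [GnGKRels, Set.mem_insert_iff, Set.mem_singleton_iff] at hr
  obtain rfl | rfl | rfl := hr
  · simp only [map_mul, map_inv, map_pow, FreeGroup.lift_apply_of]
    show gb * gd ^ n * gb ^ n * (gd ^ n * gb ^ n * gd)⁻¹ = 1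
    rw [mul_inv_eq_one]
    exact lemS n gb gd gc (relG1_3 n) (relG1_2 n)
  · simp only [map_mul, map_inv, map_pow, FreeGroup.lift_apply_of]
    show gd * ge ^ n * gd ^ n * (ge ^ n * gd ^ n * ge)⁻¹ = 1
    rw [mul_inv_eq_one]
    have h1 := lem_Q1 n ge ga hSea
    rw [← hdw] at h1
    exact h1
  · simp only [map_mul, map_inv, map_pow, FreeGroup.lift_apply_of]
    show (ge ^ n)⁻¹ * (gd ^ n)⁻¹ * ge * gd ^ n * ge ^ n
      * (gb ^ n * gd ^ n * gb * (gd ^ n)⁻¹ * (gb ^ n)⁻¹)⁻¹ = 1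
    rw [mul_inv_eq_one]
    exact (zde_eq_a n).trans (lemW n (y := gd) gb gc ga (relG1_1 n) (relG1_2 n))

end maps

section equiv
variable (n : ℕ)

local notation "ga" => (PresentedGroup.of 0 : PresentedGroup (grannyKnotDiagRels n))
local notation "gb" => (PresentedGroup.of 1 : PresentedGroup (grannyKnotDiagRels n))
local notation "gc" => (PresentedGroup.of 2 : PresentedGroup (grannyKnotDiagRels n))
local notation "gd" => (PresentedGroup.of 3 : PresentedGroup (grannyKnotDiagRels n))
local notation "ge" => (PresentedGroup.of 4 : PresentedGroup (grannyKnotDiagRels n))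
local notation "gf" => (PresentedGroup.of 5 : PresentedGroup (grannyKnotDiagRels n))

def phi : PresentedGroup (grannyKnotDiagRels n) →* PresentedGroup (GnGKRels n) :=
  PresentedGroup.toGroup (lift_f1_rels n)

def psi : PresentedGroup (GnGKRels n) →* PresentedGroup (grannyKnotDiagRels n) :=
  PresentedGroup.toGroup (lift_f2_rels n)

theorem psi_of_1 : psi n (PresentedGroup.of 1) = gd := PresentedGroup.toGroup.of _
theorem psi_of_2 : psi n (PresentedGroup.of 2) = ge := PresentedGroup.toGroup.of _

theorem psi_phi : (psi n).comp (phi n) = MonoidHom.id _ := by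
  ext x
  fin_cases x
  · -- a
    show psi n (phi n ga) = ga
    have h1 : phi n ga = Ag n := PresentedGroup.toGroup.of _
    rw [h1, hAg]
    simp only [map_mul, map_inv, map_pow]
    rw [psi_of_1, psi_of_2]
    exact zde_eq_a n
  · -- b
    show psi n (phi n gb) = gb
    have h1 : phi n gb = (PresentedGroup.of 0 : PresentedGroup (GnGKRels n)) :=
      PresentedGroup.toGroup.of _
    rw [h1]
    exact PresentedGroup.toGroup.of _
  · -- c
    show psi n (phi n gc) = gc
    have h1 : phi n gc = (PresentedGroup.of 0 : PresentedGroup (GnGKRels n)) ^ n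
        * PresentedGroup.of 1
        * ((PresentedGroup.of 0 : PresentedGroup (GnGKRels n)) ^ n)⁻¹ :=
      PresentedGroup.toGroup.of _
    rw [h1]
    simp only [map_mul, map_inv, map_pow]
    rw [psi_of_1, show psi n (PresentedGroup.of 0) = gb from PresentedGroup.toGroup.of _]
    exact (relG1_2 n).symm
  · -- d
    show psi n (phi n gd) = gd
    have h1 : phi n gd = (PresentedGroup.of 1 : PresentedGroup (GnGKRels n)) :=
      PresentedGroup.toGroup.of _
    rw [h1]
    exact psi_of_1 n
  · -- e
    show psi n (phi n ge) = ge
    have h1 : phi n ge = (PresentedGroup.of 2 : PresentedGroup (GnGKRels n)) :=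
      PresentedGroup.toGroup.of _
    rw [h1]
    exact psi_of_2 n
  · -- f
    show psi n (phi n gf) = gf
    have h1 : phi n gf = (PresentedGroup.of 2 : PresentedGroup (GnGKRels n)) ^ n * Ag n
        * ((PresentedGroup.of 2 : PresentedGroup (GnGKRels n)) ^ n)⁻¹ :=
      PresentedGroup.toGroup.of _
    rw [h1, hAg]
    simp only [map_mul, map_inv, map_pow]
    rw [psi_of_1, psi_of_2]
    show ge ^ n * ((ge ^ n)⁻¹ * (gd ^ n)⁻¹ * ge * gd ^ n * ge ^ n) * (ge ^ n)⁻¹ = gf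
    rw [zde_eq_a n]
    exact (relG1_5 n).symm

theorem phi_psi : (phi n).comp (psi n) = MonoidHom.id _ := by
  ext x
  fin_cases x
  · show phi n (psi n (PresentedGroup.of 0)) = PresentedGroup.of 0
    rw [show psi n (PresentedGroup.of 0) = gb from PresentedGroup.toGroup.of _]
    exact PresentedGroup.toGroup.of _
  · show phi n (psi n (PresentedGroup.of 1)) = PresentedGroup.of 1
    rw [psi_of_1]
    exact PresentedGroup.toGroup.of _
  · show phi n (psi n (PresentedGroup.of 2)) = PresentedGroup.of 2
    rw [psi_of_2]
    exact PresentedGroup.toGroup.of _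

end equiv
end Stmt4Aux

theorem stmt_4 (n : ℕ) (hn : 0 < n) :
    Nonempty (PresentedGroup (grannyKnotDiagRels n) ≃* PresentedGroup (GnGKRels n)) := by
  exact ⟨MonoidHom.toMulEquiv (Stmt4Aux.phi n) (Stmt4Aux.psi n)
    (Stmt4Aux.psi_phi n) (Stmt4Aux.phi_psi n)⟩
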